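/- arXiv:1103.0358 — 2 statements merged into one kernel-verified Lean document; each statement's English description precedes it below -/
import Mathlib

section
/- A network N has a (k,n) linear network code solution if and only if it has a (k,n) global linear network code solution. -/
open scoped Classical

/-- A `(k,n)` linear network code solution over a field `K` for a network given by edge maps
`src`, `tgt` and source/receiver relations `gen`, `dem`: there is a symbol function `s`
(assigning to each message assignment and each edge an `n`-dimensional symbol vector) such
that each edge's symbol is a fixed linear function (given by `n×k` and `n×n` coefficient
matrices) of the messages generated at, and the symbols entering, its start node, and each
demand is recovered by a fixed linear decoding function of the demanding node's inputs, for
every message assignment. -/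
def LinearSolution (K : Type*) [Field K] {ν ε μ : Type*} [Fintype ε] [Fintype μ]
    (src tgt : ε → ν) (gen dem : ν → μ → Prop) (k n : ℕ) : Prop :=
  ∃ s : (μ → Fin k → K) → ε → Fin n → K,
    (∀ e : ε, ∃ (C : μ → Matrix (Fin n) (Fin k) K) (D : ε → Matrix (Fin n) (Fin n) K),
      ∀ a, s a e =
        (∑ m ∈ Finset.univ.filter (fun m : μ => gen (src e) m), (C m).mulVec (a m)) +
        ∑ e' ∈ Finset.univ.filter (fun e' : ε => tgt e' = src e), (D e').mulVec (s a e')) ∧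
    (∀ (x : ν) (m' : μ), dem x m' →
      ∃ (C : μ → Matrix (Fin k) (Fin k) K) (D : ε → Matrix (Fin k) (Fin n) K),
        ∀ a, a m' =
          (∑ m ∈ Finset.univ.filter (fun m : μ => gen x m), (C m).mulVec (a m)) +
          ∑ e ∈ Finset.univ.filter (fun e : ε => tgt e = x), (D e).mulVec (s a e))

/-- A `(k,n)` global linear network code solution over `K`: an assignment `G` of global
coding vectors (a tuple of `n×k` matrices, indexed by the messages) to the edges such that
(taking `φ_msg m` to be the standard tuple with the `k×k` identity in coordinate `m`)
each edge's global coding vector is a matrix combination of those of the inputs of its start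
node, and for each demand `(x, m')` the global coding vector `φ_msg m'` is a matrix
combination of those of the inputs of `x`. -/
def GlobalLinearSolution (K : Type*) [Field K] {ν ε μ : Type*} [Fintype ε] [Fintype μ]
    [DecidableEq μ] (src tgt : ε → ν) (gen dem : ν → μ → Prop) (k n : ℕ) : Prop :=
  ∃ G : ε → μ → Matrix (Fin n) (Fin k) K,
    (∀ e : ε, ∃ (C : μ → Matrix (Fin n) (Fin k) K) (D : ε → Matrix (Fin n) (Fin n) K),
      ∀ i : μ, G e i =
        (if gen (src e) i then C i else 0) +
        ∑ e' ∈ Finset.univ.filter (fun e' : ε => tgt e' = src e), D e' * G e' i) ∧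
    (∀ (x : ν) (m' : μ), dem x m' →
      ∃ (C : μ → Matrix (Fin k) (Fin k) K) (D : ε → Matrix (Fin k) (Fin n) K),
        ∀ i : μ, (if i = m' then (1 : Matrix (Fin k) (Fin k) K) else 0) =
          (if gen x i then C i else 0) +
          ∑ e ∈ Finset.univ.filter (fun e : ε => tgt e = x), D e * G e i)


private lemma auxSumMulVec {K : Type*} [Field K] {ι p q : Type*} [Fintype q]
    (s : Finset ι) (M : ι → Matrix p q K) (v : q → K) :
    (∑ i ∈ s, M i).mulVec v = ∑ i ∈ s, (M i).mulVec v := by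
  ext r
  simp [Matrix.mulVec, dotProduct, Finset.sum_apply, Matrix.sum_apply, Finset.sum_mul]
  exact Finset.sum_comm

private lemma auxMulVecSum {K : Type*} [Field K] {ι p q : Type*} [Fintype q]
    (s : Finset ι) (M : Matrix p q K) (v : ι → q → K) :
    M.mulVec (∑ i ∈ s, v i) = ∑ i ∈ s, M.mulVec (v i) := by
  simp only [← Matrix.mulVecLin_apply, map_sum]

private lemma auxKey {K : Type*} [Field K] {ε μ : Type*} [Fintype ε] [Fintype μ] {p k n : ℕ}
    (P : μ → Prop) [DecidablePred P] (F : Finset ε)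
    (M : μ → Matrix (Fin p) (Fin k) K) (Dm : ε → Matrix (Fin p) (Fin n) K)
    (G : ε → μ → Matrix (Fin n) (Fin k) K) (a : μ → Fin k → K) :
    ∑ i : μ, ((if P i then M i else 0) + ∑ e ∈ F, Dm e * G e i).mulVec (a i)
      = (∑ i ∈ Finset.univ.filter P, (M i).mulVec (a i)) +
        ∑ e ∈ F, (Dm e).mulVec (∑ i : μ, (G e i).mulVec (a i)) := by
  simp only [Matrix.add_mulVec, Finset.sum_add_distrib]
  congr 1
  · rw [Finset.sum_filter]
    refine Finset.sum_congr rfl fun i _ => ?_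
    split <;> simp
  · calc ∑ i : μ, (∑ e ∈ F, Dm e * G e i).mulVec (a i)
        = ∑ i : μ, ∑ e ∈ F, (Dm e * G e i).mulVec (a i) := by simp only [auxSumMulVec]
      _ = ∑ e ∈ F, ∑ i : μ, (Dm e * G e i).mulVec (a i) := Finset.sum_comm
      _ = ∑ e ∈ F, (Dm e).mulVec (∑ i : μ, (G e i).mulVec (a i)) := by
          refine Finset.sum_congr rfl fun e _ => ?_
          rw [auxMulVecSum]
          exact Finset.sum_congr rfl fun i _ => (Matrix.mulVec_mulVec (a i) (Dm e) (G e i)).symm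

private lemma auxSingle {K : Type*} [Field K] {μ : Type*} [Fintype μ] [DecidableEq μ] {k : ℕ}
    (m' : μ) (a : μ → Fin k → K) :
    ∑ i : μ, (if i = m' then (1 : Matrix (Fin k) (Fin k) K) else 0).mulVec (a i) = a m' := by
  rw [Finset.sum_eq_single m' (fun i _ hi => by rw [if_neg hi, Matrix.zero_mulVec])
    (fun h => absurd (Finset.mem_univ m') h)]
  rw [if_pos rfl, Matrix.one_mulVec]

private lemma auxCols {K : Type*} [Field K] {μ : Type*} [Fintype μ] [DecidableEq μ] {p k : ℕ}
    (M N : μ → Matrix (Fin p) (Fin k) K)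
    (h : ∀ a : μ → Fin k → K, ∑ i : μ, (M i).mulVec (a i) = ∑ i : μ, (N i).mulVec (a i))
    (i : μ) : M i = N i := by
  ext r c
  have h' := h (fun j => if j = i then Pi.single c 1 else 0)
  have e1 : ∀ (M : μ → Matrix (Fin p) (Fin k) K),
      (∑ j : μ, (M j).mulVec (if j = i then Pi.single c (1 : K) else 0))
        = (M i).mulVec (Pi.single c 1) := by
    intro M
    rw [Finset.sum_eq_single i (fun j _ hj => by rw [if_neg hj, Matrix.mulVec_zero])
      (fun h => absurd (Finset.mem_univ i) h), if_pos rfl]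
  simp only [e1] at h'
  have := congrFun h' r
  simpa [Matrix.mulVec_single] using this

/-- A network (finite directed acyclic multigraph, acyclicity witnessed by a topological
numbering `ord`) has a `(k,n)` linear network code solution if and only if it has a `(k,n)`
global linear network code solution. -/
theorem stmt18 {K : Type*} [Field K] {ν ε μ : Type*} [Fintype ν] [Fintype ε] [Fintype μ]
    [DecidableEq μ] (src tgt : ε → ν) (gen dem : ν → μ → Prop)
    (ord : ν → ℕ) (hord : ∀ e, ord (src e) < ord (tgt e)) (k n : ℕ) :
    LinearSolution K src tgt gen dem k n ↔ GlobalLinearSolution K src tgt gen dem k n := by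
  constructor
  · rintro ⟨s, hE, hR⟩
    choose C D hCD using hE
    let g : ℕ → ε → μ → Matrix (Fin n) (Fin k) K := fun N =>
      Nat.rec (motive := fun _ => ε → μ → Matrix (Fin n) (Fin k) K) (fun _ _ => 0)
        (fun _ gp e i =>
          (if gen (src e) i then C e i else 0) +
          ∑ e' ∈ Finset.univ.filter (fun e' : ε => tgt e' = src e), D e e' * gp e' i) N
    have hgsucc : ∀ N (e : ε) (i : μ), g (N + 1) e i =
        (if gen (src e) i then C e i else 0) +
        ∑ e' ∈ Finset.univ.filter (fun e' : ε => tgt e' = src e), D e e' * g N e' i :=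
      fun _ _ _ => rfl
    have hmemF : ∀ (x : ν) (e' : ε), e' ∈ Finset.univ.filter (fun e' : ε => tgt e' = x) →
        ord (src e') < ord x := by
      intro x e' h
      rw [Finset.mem_filter] at h
      have := hord e'
      rw [h.2] at this
      exact this
    have hstab : ∀ N (e : ε), ord (src e) < N → g (N + 1) e = g N e := by
      intro N
      induction N with
      | zero => intro e h; exact absurd h (Nat.not_lt_zero _)
      | succ M IH =>
        intro e h
        funext i
        rw [hgsucc (M + 1) e i, hgsucc M e i]
        congr 1
        refine Finset.sum_congr rfl fun e' he' => ?_
        rw [IH e' (lt_of_lt_of_le (hmemF _ e' he') (Nat.lt_succ_iff.mp h))]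
    have hsym : ∀ N (e : ε), ord (src e) < N → ∀ a,
        s a e = ∑ i : μ, (g N e i).mulVec (a i) := by
      intro N
      induction N with
      | zero => intro e h; exact absurd h (Nat.not_lt_zero _)
      | succ M IH =>
        intro e h a
        rw [hCD e a]
        simp only [hgsucc]
        rw [auxKey]
        congr 1
        refine Finset.sum_congr rfl fun e' he' => ?_
        rw [IH e' (lt_of_lt_of_le (hmemF _ e' he') (Nat.lt_succ_iff.mp h)) a]
    set Bm := Finset.univ.sup ord with hBm
    have hB : ∀ x : ν, ord x ≤ Bm := fun x => Finset.le_sup (Finset.mem_univ x)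
    refine ⟨g (Bm + 1), ?_, ?_⟩
    · intro e
      refine ⟨C e, fun e' => D e e', fun i => ?_⟩
      rw [hgsucc]
      congr 1
      refine Finset.sum_congr rfl fun e' he' => ?_
      rw [hstab Bm e' (lt_of_lt_of_le (hmemF _ e' he') (hB (src e)))]
    · intro x m' hx
      obtain ⟨C2, D2, h2⟩ := hR x m' hx
      refine ⟨C2, D2, ?_⟩
      refine auxCols (fun i => if i = m' then (1 : Matrix (Fin k) (Fin k) K) else 0)
        (fun i => (if gen x i then C2 i else 0) +
          ∑ e ∈ Finset.univ.filter (fun e : ε => tgt e = x), D2 e * g (Bm + 1) e i) ?_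
      intro a
      rw [auxSingle, auxKey, h2 a]
      congr 1
      refine Finset.sum_congr rfl fun e he => ?_
      rw [hsym (Bm + 1) e (Nat.lt_succ_of_le (le_of_lt (lt_of_lt_of_le (hmemF x e he) (hB x)))) a]
  · rintro ⟨G, hE, hR⟩
    refine ⟨fun a e => ∑ i : μ, (G e i).mulVec (a i), ?_, ?_⟩
    · intro e
      obtain ⟨C, D, h⟩ := hE e
      refine ⟨C, D, fun a => ?_⟩
      calc ∑ i : μ, (G e i).mulVec (a i)
          = ∑ i : μ, ((if gen (src e) i then C i else 0) +
              ∑ e' ∈ Finset.univ.filter (fun e' : ε => tgt e' = src e), D e' * G e' i).mulVec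
              (a i) := Finset.sum_congr rfl fun i _ => by rw [← h i]
        _ = _ := auxKey _ _ _ _ _ _
    · intro x m' hx
      obtain ⟨C, D, h⟩ := hR x m' hx
      refine ⟨C, D, fun a => ?_⟩
      calc a m' = ∑ i : μ, (if i = m' then (1 : Matrix (Fin k) (Fin k) K) else 0).mulVec (a i) :=
            (auxSingle m' a).symm
        _ = ∑ i : μ, ((if gen x i then C i else 0) +
              ∑ e ∈ Finset.univ.filter (fun e : ε => tgt e = x), D e * G e i).mulVec (a i) :=
            Finset.sum_congr rfl fun i _ => by rw [h i]
        _ = _ := auxKey _ _ _ _ _ _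
end

section
/- If a network N is a matroidal network associated with a matroid representable over a finite field F, then N is scalar-linearly solvable (over some finite extension of F). -/
open scoped Classical

/-- A `(1,1)` (scalar-linear) network code solution over a field `K`: a symbol function `s`
assigning to each message assignment and each edge a field symbol, such that each edge
carries a fixed linear combination of the messages generated at, and the symbols entering,
its start node, and each demand is recovered by a fixed linear combination of the demanding
node's inputs, for every message assignment. -/
def ScalarLinearSolution (K : Type*) [Field K] {ν ε μ : Type*} [Fintype ε] [Fintype μ]
    (src tgt : ε → ν) (gen dem : ν → μ → Prop) : Prop :=
  ∃ s : (μ → K) → ε → K,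
    (∀ e : ε, ∃ (C : μ → K) (D : ε → K),
      ∀ a, s a e =
        (∑ m ∈ Finset.univ.filter (fun m : μ => gen (src e) m), C m * a m) +
        ∑ e' ∈ Finset.univ.filter (fun e' : ε => tgt e' = src e), D e' * s a e') ∧
    (∀ (x : ν) (m' : μ), dem x m' →
      ∃ (C : μ → K) (D : ε → K),
        ∀ a, a m' =
          (∑ m ∈ Finset.univ.filter (fun m : μ => gen x m), C m * a m) +
          ∑ e ∈ Finset.univ.filter (fun e : ε => tgt e = x), D e * s a e)

/-- The semiring structure underlying a field structure (helper to state existential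
quantification over field structures). -/
def fieldSemiring (K : Type*) (iK : Field K) : Semiring K := by
  letI := iK; infer_instance

/-- The network is scalar-linearly solvable over some finite field extension of `F`. -/
def ScalarLinearlySolvableOverExt (F : Type*) [Field F] {ν ε μ : Type*}
    [Fintype ε] [Fintype μ] (src tgt : ε → ν) (gen dem : ν → μ → Prop) : Prop :=
  ∃ (K : Type) (iK : Field K) (_ : Fintype K)
    (_ : @Algebra F K _ (fieldSemiring K iK)),
    @ScalarLinearSolution K iK ν ε μ _ _ src tgt gen dem

/-!
Identify every message and edge with its column vector. Because the message columns are
independent, each message assignment `a` extends to a linear functional `φ a` with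
`φ a (col m) = a m`, and edge `e` carries the symbol `φ a (col e)`. The rank condition puts the
column of every edge leaving a node, and of every message it demands, in the span of the columns
entering it; applying `φ a` to such a linear relation gives coding coefficients that do not
depend on `a`.
-/

open Submodule

section LinearAlgebra

variable {K W : Type*} [Field K] [AddCommGroup W] [Module K W]

theorem LinearIndependent.exists_linearMap_apply_eq {ι : Type*} {v : ι → W}
    (hv : LinearIndependent K v) (a : ι → K) : ∃ φ : W →ₗ[K] K, ∀ i, φ (v i) = a i := by
  obtain ⟨φ, hφ⟩ := LinearMap.exists_extend (Finsupp.linearCombination K a ∘ₗ hv.repr)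
  refine ⟨φ, fun i => ?_⟩
  have hrepr := hv.repr_eq_single i ⟨v i, subset_span ⟨i, rfl⟩⟩ rfl
  simpa [hrepr] using congr($hφ ⟨v i, subset_span ⟨i, rfl⟩⟩)

theorem subset_span_of_finrank_span_eq {s t : Set W} (hst : s ⊆ t) (ht : t.Finite)
    (h : Module.finrank K (span K s) = Module.finrank K (span K t)) : t ⊆ span K s := by
  have : FiniteDimensional K (span K t) := FiniteDimensional.span_of_finite K ht
  rw [eq_of_le_of_finrank_eq (span_mono hst) h]
  exact subset_span

end LinearAlgebra

theorem Submodule.exists_eq_sum_add_sum_of_mem_span_image {R M ι κ : Type*} [Semiring R]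
    [AddCommMonoid M] [Module R M] [Fintype ι] [Fintype κ] (v : ι ⊕ κ → M)
    (p : ι → Prop) (q : κ → Prop) {u : M}
    (hu : u ∈ span R (v '' (Sum.inl '' {i | p i} ∪ Sum.inr '' {k | q k}))) :
    ∃ (c : ι → R) (d : κ → R), u =
      ∑ i ∈ Finset.univ.filter p, c i • v (Sum.inl i) +
      ∑ k ∈ Finset.univ.filter q, d k • v (Sum.inr k) := by
  rw [Set.image_union, Set.image_image, Set.image_image, span_union, mem_sup] at hu
  obtain ⟨y, hy, z, hz, rfl⟩ := hu
  rw [← Finset.coe_filter_univ, mem_span_image_finset_iff_exists_fun'] at hy hz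
  obtain ⟨c, rfl⟩ := hy
  obtain ⟨d, rfl⟩ := hz
  exact ⟨c, d, rfl⟩

section Network

variable {ν ε μ : Type*}

def nodeInputs (gen : ν → μ → Prop) (tgt : ε → ν) (x : ν) : Set (μ ⊕ ε) :=
  Sum.inl '' {m | gen x m} ∪ Sum.inr '' {e | tgt e = x}

variable [Fintype ε] [Fintype μ] {src tgt : ε → ν} {gen dem : ν → μ → Prop}

theorem scalarLinearSolution_of_mem_span_nodeInputs {K W : Type*} [Field K] [AddCommGroup W]
    [Module K W] (V : μ ⊕ ε → W) (hindep : LinearIndependent K (V ∘ Sum.inl))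
    (hedge : ∀ e, V (.inr e) ∈ span K (V '' nodeInputs gen tgt (src e)))
    (hdem : ∀ x m, dem x m → V (.inl m) ∈ span K (V '' nodeInputs gen tgt x)) :
    ScalarLinearSolution K src tgt gen dem := by
  choose φ hφ using hindep.exists_linearMap_apply_eq
  have decode : ∀ x u, u ∈ span K (V '' nodeInputs gen tgt x) →
      ∃ (C : μ → K) (D : ε → K), ∀ a, φ a u =
        ∑ m ∈ Finset.univ.filter (gen x), C m * a m +
        ∑ e ∈ Finset.univ.filter (fun e => tgt e = x), D e * φ a (V (.inr e)) := by
    intro x u hu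
    obtain ⟨C, D, rfl⟩ := exists_eq_sum_add_sum_of_mem_span_image V _ _ hu
    refine ⟨C, D, fun a => ?_⟩
    simp only [map_add, map_sum, map_smul, smul_eq_mul, ← Function.comp_apply (f := V), hφ]
  refine ⟨fun a e => φ a (V (.inr e)), fun e => decode _ _ (hedge e), fun x m hm => ?_⟩
  obtain ⟨C, D, h⟩ := decode x _ (hdem x m hm)
  exact ⟨C, D, fun a => (hφ a m).symm.trans (h a)⟩

theorem ScalarLinearSolution.of_ringEquiv {K L : Type*} [Field K] [Field L] (σ : K ≃+* L)
    (h : ScalarLinearSolution L src tgt gen dem) : ScalarLinearSolution K src tgt gen dem := by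
  obtain ⟨s, hedge, hdem⟩ := h
  refine ⟨fun a e => σ.symm (s (σ ∘ a) e), fun e => ?_, fun x m hm => ?_⟩
  · obtain ⟨C, D, h⟩ := hedge e
    refine ⟨σ.symm ∘ C, σ.symm ∘ D, fun a => ?_⟩
    simp [h (σ ∘ a)]
  · obtain ⟨C, D, h⟩ := hdem x m hm
    refine ⟨σ.symm ∘ C, σ.symm ∘ D, fun a => ?_⟩
    simpa using congr(σ.symm $(h (σ ∘ a)))

theorem ScalarLinearSolution.scalarLinearlySolvableOverExt {F : Type*} [Field F] [Fintype F]
    (h : ScalarLinearSolution F src tgt gen dem) :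
    ScalarLinearlySolvableOverExt F src tgt gen dem :=
  -- the extension field has to live in `Type`, so take a copy of `F` there
  let σ := Shrink.ringEquiv.{0} F
  ⟨Shrink.{0} F, inferInstance, inferInstance, σ.symm.toRingHom.toAlgebra, h.of_ringEquiv σ⟩

end Network

theorem stmt19_general {F : Type*} [Field F] [Fintype F] {ν ε μ : Type*}
    [Fintype ε] [Fintype μ]
    (src tgt : ε → ν) (gen dem : ν → μ → Prop)
    {d1 d2 : ℕ}
    (f : μ ⊕ ε → Fin d2)
    (col : Fin d2 → Fin d1 → F)
    (InS OutS : ν → Set (μ ⊕ ε))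
    (hIn : ∀ x, InS x = (Sum.inl '' {m | gen x m}) ∪ (Sum.inr '' {e | tgt e = x}))
    (hOut : ∀ x, OutS x = (Sum.inl '' {m | dem x m}) ∪ (Sum.inr '' {e | src e = x}))
    -- f(μ) is an independent set of columns
    (hindep : LinearIndependent F fun m : μ => col (f (Sum.inl m)))
    -- rank condition: r(f(In(x))) = r(f(In(x) ∪ Out(x))) for every node x
    (hrank : ∀ x : ν,
      Module.finrank F (Submodule.span F (col '' (f '' InS x))) =
      Module.finrank F (Submodule.span F (col '' (f '' (InS x ∪ OutS x))))) :
    ScalarLinearlySolvableOverExt F src tgt gen dem := by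
  obtain rfl : InS = nodeInputs gen tgt := funext hIn
  have hout : ∀ x, (col ∘ f) '' OutS x ⊆ span F ((col ∘ f) '' nodeInputs gen tgt x) := by
    intro x
    simp only [Set.image_comp]
    exact (Set.image_mono (Set.image_mono Set.subset_union_right)).trans <|
      subset_span_of_finrank_span_eq (Set.image_mono (Set.image_mono Set.subset_union_left))
        (Set.toFinite _) (hrank x)
  refine (scalarLinearSolution_of_mem_span_nodeInputs (col ∘ f) hindep (fun e => ?_)
    (fun x m hm => ?_)).scalarLinearlySolvableOverExt
  · exact hout (src e) ⟨.inr e, by simp [hOut], rfl⟩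
  · exact hout x ⟨.inl m, by simp [hOut, hm], rfl⟩

/-- If a network is a matroidal network associated with a matroid representable over a finite
field `F` — i.e., there is a network-matroid mapping `f` from messages and edges to the
columns of a matrix `A` over `F` that is injective on messages, maps the messages to an
independent set of columns, and for each node `x` the columns of `In(x)` and of
`In(x) ∪ Out(x)` span subspaces of the same rank — then the network is scalar-linearly
solvable (over some finite extension of `F`). -/
theorem stmt19 {F : Type*} [Field F] [Fintype F] {ν ε μ : Type*}
    [Fintype ν] [Fintype ε] [Fintype μ]
    (src tgt : ε → ν) (gen dem : ν → μ → Prop)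
    -- finite directed acyclic multigraph
    (ord : ν → ℕ) (hord : ∀ e, ord (src e) < ord (tgt e))
    {d1 d2 : ℕ} (A : Matrix (Fin d1) (Fin d2) F)
    (f : μ ⊕ ε → Fin d2)
    (col : Fin d2 → Fin d1 → F) (hcol : ∀ j i, col j i = A i j)
    (InS OutS : ν → Set (μ ⊕ ε))
    (hIn : ∀ x, InS x = (Sum.inl '' {m | gen x m}) ∪ (Sum.inr '' {e | tgt e = x}))
    (hOut : ∀ x, OutS x = (Sum.inl '' {m | dem x m}) ∪ (Sum.inr '' {e | src e = x}))
    -- f is one-to-one on the messages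
    (hinj : Function.Injective fun m : μ => f (Sum.inl m))
    -- f(μ) is an independent set of columns
    (hindep : LinearIndependent F fun m : μ => col (f (Sum.inl m)))
    -- rank condition: r(f(In(x))) = r(f(In(x) ∪ Out(x))) for every node x
    (hrank : ∀ x : ν,
      Module.finrank F (Submodule.span F (col '' (f '' InS x))) =
      Module.finrank F (Submodule.span F (col '' (f '' (InS x ∪ OutS x))))) :
    ScalarLinearlySolvableOverExt F src tgt gen dem :=
  stmt19_general src tgt gen dem f col InS OutS hIn hOut hindep hrank
end
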